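/- arXiv:1202.2584 — 3 statements merged into one kernel-verified Lean document; each statement's English description precedes it below -/
import Mathlib

section
/- Let I be a finite subset of ℝ^d and ζ a point in the convex hull of I with a strictly positive convex representation ζ = Σ_{z∈I} β_z z (all β_z > 0, Σβ_z = 1). If ξ_n ∈ conv(I) is a sequence with ξ_n → ζ, then there exist coefficients α^n_z ≥ 0 with Σ_{z∈I} α^n_z = 1, ξ_n = Σ_{z∈I} α^n_z z, and α^n_z → β_z for every z ∈ I. -/
/-! The map `c ↦ (∑ z ∈ I, c z • z, ∑ z ∈ I, c z)` is linear with finite-dimensional range, so it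
has a continuous linear right inverse `g` on its range. Correcting `β` by `g (ξ n - ζ, 0)` gives
affine representations of `ξ n` converging to `β`; since `β > 0` on the finite set `I`, they are
eventually nonnegative; at the other indices any convex representation of `ξ n` will do. -/

open Filter Topology

theorem LinearMap.exists_tendsto_preimage_of_tendsto
    {𝕜 V W ι : Type*} [NontriviallyNormedField 𝕜] [CompleteSpace 𝕜]
    [AddCommGroup V] [Module 𝕜 V] [TopologicalSpace V] [IsTopologicalAddGroup V]
    [ContinuousSMul 𝕜 V]
    [AddCommGroup W] [Module 𝕜 W] [TopologicalSpace W] [IsTopologicalAddGroup W]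
    [ContinuousSMul 𝕜 W] [T2Space W] [FiniteDimensional 𝕜 W]
    (M : V →ₗ[𝕜] W) {l : Filter ι} {x : V} {y : ι → W} (hy : ∀ i, y i ∈ LinearMap.range M)
    (hlim : Tendsto y l (𝓝 (M x))) :
    ∃ x' : ι → V, (∀ i, M (x' i) = y i) ∧ Tendsto x' l (𝓝 x) := by
  obtain ⟨g, hg⟩ := M.rangeRestrict.exists_rightInverse_of_surjective M.range_rangeRestrict
  have hMg (w : LinearMap.range M) : M (g w) = w :=
    congrArg Subtype.val (LinearMap.congr_fun hg w)
  have hdiff (i : ι) : y i - M x ∈ LinearMap.range M :=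
    sub_mem (hy i) (LinearMap.mem_range_self M x)
  refine ⟨fun i => x + g ⟨y i - M x, hdiff i⟩, fun i => by simp [hMg], ?_⟩
  have hdiff_tendsto : Tendsto (fun i => (⟨y i - M x, hdiff i⟩ : LinearMap.range M)) l (𝓝 0) := by
    rw [tendsto_subtype_rng, Submodule.coe_zero, ← sub_self (M x)]
    exact hlim.sub_const _
  simpa using tendsto_const_nhds.add
    ((g.continuous_of_finiteDimensional.tendsto 0).comp hdiff_tendsto)

def Finset.weightedSumTotal {E : Type*} [AddCommGroup E] [Module ℝ E] (I : Finset E) :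
    (E → ℝ) →ₗ[ℝ] E × ℝ where
  toFun c := (∑ z ∈ I, c z • z, ∑ z ∈ I, c z)
  map_add' c c' := by simp [add_smul, Finset.sum_add_distrib]
  map_smul' r c := by simp [smul_smul, Finset.mul_sum, Finset.smul_sum]

theorem Finset.weightedSumTotal_apply {E : Type*} [AddCommGroup E] [Module ℝ E] (I : Finset E)
    (c : E → ℝ) : I.weightedSumTotal c = (∑ z ∈ I, c z • z, ∑ z ∈ I, c z) :=
  rfl

theorem stmt0 (d : ℕ) (I : Finset (Fin d → ℝ)) (β : (Fin d → ℝ) → ℝ)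
    (hβpos : ∀ z ∈ I, 0 < β z) (hβsum : ∑ z ∈ I, β z = 1)
    (ζ : Fin d → ℝ) (hζ : ζ = ∑ z ∈ I, β z • z)
    (ξ : ℕ → (Fin d → ℝ)) (hξ : ∀ n, ξ n ∈ convexHull ℝ (I : Set (Fin d → ℝ)))
    (hlim : Tendsto ξ atTop (𝓝 ζ)) :
    ∃ α : ℕ → (Fin d → ℝ) → ℝ,
      (∀ n, ∀ z ∈ I, 0 ≤ α n z) ∧
      (∀ n, ∑ z ∈ I, α n z = 1) ∧
      (∀ n, ξ n = ∑ z ∈ I, α n z • z) ∧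
      (∀ z ∈ I, Tendsto (fun n => α n z) atTop (𝓝 (β z))) := by
  classical
  choose γ hγ_nonneg hγ_sum hγ_comb using fun n => Finset.mem_convexHull'.1 (hξ n)
  have hγ (n : ℕ) : I.weightedSumTotal (γ n) = (ξ n, 1) := by
    rw [Finset.weightedSumTotal_apply, hγ_comb, hγ_sum]
  have hβ : I.weightedSumTotal β = (ζ, 1) := by rw [Finset.weightedSumTotal_apply, hζ, hβsum]
  obtain ⟨c, hc, hc_tendsto⟩ := I.weightedSumTotal.exists_tendsto_preimage_of_tendsto
    (fun n => ⟨γ n, hγ n⟩) (hβ ▸ hlim.prodMk_nhds tendsto_const_nhds)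
  have hc_nonneg : ∀ᶠ n in atTop, ∀ z ∈ I, 0 ≤ c n z := by
    rw [eventually_all_finset]
    exact fun z hz => (tendsto_pi_nhds.1 hc_tendsto z).eventually_const_le (hβpos z hz)
  have hrep (n : ℕ) : I.weightedSumTotal
      (if ∀ z ∈ I, 0 ≤ c n z then c n else γ n) = (ξ n, 1) := by
    split_ifs
    exacts [hc n, hγ n]
  refine ⟨fun n => if ∀ z ∈ I, 0 ≤ c n z then c n else γ n, fun n => ?_,
    fun n => congrArg Prod.snd (hrep n), fun n => (congrArg Prod.fst (hrep n)).symm,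
    fun z _ => ?_⟩
  · dsimp only
    split_ifs with h
    exacts [h, hγ_nonneg n]
  · refine (tendsto_pi_nhds.1 hc_tendsto z).congr' ?_
    filter_upwards [hc_nonneg] with n hn
    rw [if_pos hn]
end

section
/- Let I be a finite subset of ℚ^d and ζ ∈ conv(I) with a strictly positive convex representation ζ = Σ_{z∈I} β_z z. If ξ_n ∈ conv(I) ∩ ℚ^d converges to ζ, then there exist RATIONAL coefficients α^n_z ≥ 0 with Σ_{z∈I} α^n_z = 1, ξ_n = Σ_{z∈I} α^n_z z, and α^n_z → β_z for every z ∈ I. -/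
/-!
Rational solutions of a linear system with rational coefficients are dense in its real
solutions. Eliminate the variables one at a time: if the column of a variable lies in the
`ℚ`-span of the remaining columns, moving the variable to a nearby rational value is compensated
by the remaining variables; otherwise a rational functional vanishing on the remaining columns
shows that the variable is already rational.

In homogeneous coordinates `(1, z)` the convex representations of `ξ n` are the nonnegative
solutions of such a system. A continuous right inverse of the real coefficient map yields real
representations of `ξ n` converging to `β`; rational ones within `1 / (n + 1)` of them are
eventually nonnegative since `β > 0`. For the remaining `n`, approximating a real convex
representation on its support, where it is positive, gives nonnegative rational weights.
-/

open Filter Topology Matrix Submodule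

theorem exists_dotProduct_eq_one_of_notMem {K κ : Type*} [Field K] [Fintype κ]
    {p : Submodule K (κ → K)} {w : κ → K} (hw : w ∉ p) :
    ∃ u : κ → K, (∀ v ∈ p, u ⬝ᵥ v = 0) ∧ u ⬝ᵥ w = 1 := by
  classical
  obtain ⟨f, hfw, hfp⟩ := p.exists_dual_map_eq_bot_of_notMem hw inferInstance
  have hf : ∀ x, (fun j => f fun j' => if j = j' then 1 else 0) ⬝ᵥ x = f x := fun x => by
    simp [f.pi_apply_eq_sum_univ x, dotProduct, mul_comm]
  refine ⟨(f w)⁻¹ • fun j => f fun j' => if j = j' then 1 else 0, fun v hv => ?_, ?_⟩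
  · have : f v = 0 := by
      have h := mem_map_of_mem (f := f) hv
      rwa [hfp, Submodule.mem_bot] at h
    simp [smul_dotProduct, hf, this]
  · simp [smul_dotProduct, hf, hfw]

theorem LinearMap.exists_tendsto_of_mem_range {𝕜 E F α : Type*} [NontriviallyNormedField 𝕜]
    [CompleteSpace 𝕜] [AddCommGroup E] [Module 𝕜 E] [TopologicalSpace E]
    [IsTopologicalAddGroup E] [ContinuousSMul 𝕜 E] [AddCommGroup F] [Module 𝕜 F]
    [TopologicalSpace F] [IsTopologicalAddGroup F] [ContinuousSMul 𝕜 F] [T2Space F]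
    [FiniteDimensional 𝕜 F] (T : E →ₗ[𝕜] F) {l : Filter α} {b : α → F} {x : E}
    (hb : ∀ n, b n ∈ range T) (hlim : Tendsto b l (𝓝 (T x))) :
    ∃ y : α → E, (∀ n, T (y n) = b n) ∧ Tendsto y l (𝓝 x) := by
  obtain ⟨S, hS⟩ := T.rangeRestrict.exists_rightInverse_of_surjective T.range_rangeRestrict
  have hTS : ∀ m, T (S m) = m := fun m => congrArg Subtype.val (LinearMap.congr_fun hS m)
  let m : α → range T := fun n => ⟨b n - T x, sub_mem (hb n) (mem_range_self T x)⟩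
  refine ⟨fun n => x + S (m n), fun n => by simp [hTS, m], ?_⟩
  have hm : Tendsto m l (𝓝 0) := by
    rw [tendsto_subtype_rng]
    simpa using hlim.sub_const (T x)
  simpa using tendsto_const_nhds.add ((S.continuous_of_finiteDimensional.tendsto 0).comp hm)

section RationalSolutions

variable {ι κ : Type*}

lemma ratCast_comp_sum_smul (s : Finset ι) (y : ι → ℚ) (v : ι → κ → ℚ) :
    (Rat.cast ∘ ∑ i ∈ s, y i • v i : κ → ℝ) = ∑ i ∈ s, (y i : ℝ) • (Rat.cast ∘ v i) := by
  ext j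
  simp [Finset.sum_apply]

lemma ratCast_comp_sub_smul (b w : κ → ℚ) (q : ℚ) :
    (Rat.cast ∘ (b - q • w) : κ → ℝ) = Rat.cast ∘ b - (q : ℝ) • (Rat.cast ∘ w) := by
  ext j
  simp

variable [Fintype κ]

lemma ratCast_dotProduct_ratCast (u w : κ → ℚ) :
    (Rat.cast ∘ u : κ → ℝ) ⬝ᵥ (Rat.cast ∘ w) = ((u ⬝ᵥ w : ℚ) : ℝ) := by
  simp [dotProduct]

lemma exists_eq_ratCast_of_notMem_span (v : ι → κ → ℚ) {s : Finset ι} {a : ι} {b : κ → ℚ}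
    {x : ι → ℝ}
    (hx : x a • (Rat.cast ∘ v a : κ → ℝ) + ∑ i ∈ s, x i • (Rat.cast ∘ v i) = Rat.cast ∘ b)
    (hspan : v a ∉ span ℚ (v '' s)) : ∃ q : ℚ, x a = q := by
  obtain ⟨u, hu0, hu1⟩ := exists_dotProduct_eq_one_of_notMem hspan
  have h := congrArg ((Rat.cast ∘ u : κ → ℝ) ⬝ᵥ ·) hx
  simp only [dotProduct_add, dotProduct_sum, dotProduct_smul, ratCast_dotProduct_ratCast,
    hu1] at h
  rw [Finset.sum_eq_zero fun i hi => by
    rw [hu0 _ (subset_span (Set.mem_image_of_mem v hi))]; simp] at h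
  exact ⟨u ⬝ᵥ b, by simpa using h⟩

lemma exists_rat_elimination_step (v : ι → κ → ℚ) {s : Finset ι} {a : ι} {b : κ → ℚ}
    {x : ι → ℝ}
    (hx : x a • (Rat.cast ∘ v a : κ → ℝ) + ∑ i ∈ s, x i • (Rat.cast ∘ v i) = Rat.cast ∘ b)
    {ε : ι → ℝ} (hεa : 0 < ε a) (hε : ∀ i ∈ s, 0 < ε i) :
    ∃ (q : ℚ) (x' : ι → ℝ), |x a - q| < ε a ∧ (∀ i ∈ s, |x i - x' i| < ε i) ∧
      ∑ i ∈ s, x' i • (Rat.cast ∘ v i : κ → ℝ) = Rat.cast ∘ (b - q • v a) := by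
  simp only [ratCast_comp_sub_smul, ← hx]
  by_cases hspan : v a ∈ span ℚ (v '' s)
  · obtain ⟨c, hc⟩ := (mem_span_image_finset_iff_exists_fun' ℚ).1 hspan
    have hnear : ∀ᶠ r in 𝓝 (x a), |x a - r| < ε a ∧ ∀ i ∈ s, |(x a - r) * c i| < ε i := by
      have hlim : Tendsto (fun r => x a - r) (𝓝 (x a)) (𝓝 0) := by
        simpa using (continuous_sub_left (x a)).tendsto (x a)
      refine (hlim.abs.eventually (gt_mem_nhds (by simpa using hεa))).and ?_
      refine (Filter.eventually_all_finset s).2 fun i hi => ?_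
      have hεi : |(0 : ℝ) * c i| < ε i := by simpa using hε i hi
      exact ((hlim.mul_const (c i : ℝ)).abs).eventually (gt_mem_nhds hεi)
    obtain ⟨_, ⟨q, rfl⟩, hq, hqs⟩ := Rat.denseRange_cast.inter_nhds_nonempty hnear
    refine ⟨q, fun i => x i + (x a - q) * c i, hq, fun i hi => by simpa using hqs i hi, ?_⟩
    have hca : ∑ i ∈ s, (c i : ℝ) • (Rat.cast ∘ v i : κ → ℝ) = Rat.cast ∘ v a := by
      rw [← ratCast_comp_sum_smul, hc]
    have hsplit : ∑ i ∈ s, (x i + (x a - q) * c i) • (Rat.cast ∘ v i : κ → ℝ) =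
        ∑ i ∈ s, x i • (Rat.cast ∘ v i : κ → ℝ) + (x a - q) • Rat.cast ∘ v a := by
      simp only [add_smul, mul_smul, Finset.sum_add_distrib, ← Finset.smul_sum, hca]
    rw [hsplit, sub_smul]
    abel
  · obtain ⟨q, hxa⟩ := exists_eq_ratCast_of_notMem_span v hx hspan
    refine ⟨q, x, by simp [hxa, hεa], fun i hi => by simpa using hε i hi, ?_⟩
    rw [← hxa]
    abel

theorem exists_rat_near_of_sum_smul_eq (v : ι → κ → ℚ) (s : Finset ι) {b : κ → ℚ}
    {x : ι → ℝ} (hx : ∑ i ∈ s, x i • (Rat.cast ∘ v i : κ → ℝ) = Rat.cast ∘ b)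
    {ε : ι → ℝ} (hε : ∀ i ∈ s, 0 < ε i) :
    ∃ y : ι → ℚ, ∑ i ∈ s, y i • v i = b ∧ ∀ i ∈ s, |x i - y i| < ε i := by
  classical
  induction s using Finset.induction_on generalizing b x ε with
  | empty =>
    refine ⟨0, ?_, by simp⟩
    ext j
    have h : ((b j : ℚ) : ℝ) = 0 := by simpa using (congrFun hx j).symm
    rw [Finset.sum_empty, Pi.zero_apply]
    exact_mod_cast h.symm
  | insert a s ha ih =>
    rw [Finset.sum_insert ha] at hx
    have hε2 : ∀ i ∈ insert a s, 0 < ε i / 2 := fun i hi => half_pos (hε i hi)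
    obtain ⟨q, x', hq, hxx', hsum⟩ := exists_rat_elimination_step v hx
      (hε2 a (Finset.mem_insert_self a s)) fun i hi => hε2 i (Finset.mem_insert_of_mem hi)
    obtain ⟨y, hy, hyx⟩ := ih hsum fun i hi => hε2 i (Finset.mem_insert_of_mem hi)
    refine ⟨Function.update y a q, ?_, ?_⟩
    · rw [Finset.sum_insert ha, Function.update_self, Finset.sum_congr rfl fun i hi => by
        rw [Function.update_of_ne (ne_of_mem_of_not_mem hi ha)], hy]
      abel
    · intro i hi
      rcases Finset.mem_insert.1 hi with rfl | hi
      · simpa using hq.trans (half_lt_self (hε i (Finset.mem_insert_self i s)))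
      · rw [Function.update_of_ne (ne_of_mem_of_not_mem hi ha)]
        have := abs_sub_le (x i) (x' i) (y i)
        linarith [hxx' i hi, hyx i hi]

theorem exists_rat_nonneg_of_sum_smul_eq (v : ι → κ → ℚ) (s : Finset ι) {b : κ → ℚ}
    {w : ι → ℝ} (hw0 : ∀ i ∈ s, 0 ≤ w i)
    (hw : ∑ i ∈ s, w i • (Rat.cast ∘ v i : κ → ℝ) = Rat.cast ∘ b) :
    ∃ y : ι → ℚ, (∀ i ∈ s, 0 ≤ y i) ∧ ∑ i ∈ s, y i • v i = b := by
  classical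
  have hsupp : ∑ i ∈ s with 0 < w i, w i • (Rat.cast ∘ v i : κ → ℝ) = Rat.cast ∘ b := by
    refine (Finset.sum_filter_of_ne fun i hi hne => ?_).trans hw
    exact (hw0 i hi).lt_of_ne' fun h => hne (by simp [h])
  obtain ⟨y, hy, hyw⟩ := exists_rat_near_of_sum_smul_eq v _ hsupp (ε := w) fun i hi =>
    (Finset.mem_filter.1 hi).2
  refine ⟨fun i => if 0 < w i then y i else 0, fun i hi => ?_, ?_⟩
  · dsimp only
    split_ifs with hwi
    · have := abs_lt.1 (hyw i (Finset.mem_filter.2 ⟨hi, hwi⟩))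
      exact_mod_cast (by linarith : (0 : ℝ) ≤ y i)
    · exact le_rfl
  · simp only [← hy, Finset.sum_filter, ite_smul, zero_smul]

theorem exists_rat_nonneg_tendsto_of_sum_smul_eq (v : ι → κ → ℚ) (s : Finset ι)
    {b : ℕ → κ → ℚ} {β : ι → ℝ} (hβ : ∀ i ∈ s, 0 < β i)
    (hb : ∀ n, ∃ w : ι → ℝ, (∀ i ∈ s, 0 ≤ w i) ∧
      ∑ i ∈ s, w i • (Rat.cast ∘ v i : κ → ℝ) = Rat.cast ∘ b n)
    (hlim : Tendsto (fun n => (Rat.cast ∘ b n : κ → ℝ)) atTop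
      (𝓝 (∑ i ∈ s, β i • (Rat.cast ∘ v i : κ → ℝ)))) :
    ∃ y : ℕ → ι → ℚ, (∀ n, ∀ i ∈ s, 0 ≤ y n i) ∧ (∀ n, ∑ i ∈ s, y n i • v i = b n) ∧
      ∀ i ∈ s, Tendsto (fun n => (y n i : ℝ)) atTop (𝓝 (β i)) := by
  classical
  choose w hw0 hw using hb
  choose r hr0 hr using fun n => exists_rat_nonneg_of_sum_smul_eq v s (hw0 n) (hw n)
  let T : (ι → ℝ) →ₗ[ℝ] (κ → ℝ) := ∑ i ∈ s, (LinearMap.proj i).smulRight (Rat.cast ∘ v i)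
  have hT : ∀ c, T c = ∑ i ∈ s, c i • (Rat.cast ∘ v i : κ → ℝ) := fun c => by simp [T]
  obtain ⟨x, hxT, hxβ⟩ := T.exists_tendsto_of_mem_range (x := β)
    (fun n => ⟨w n, by rw [hT, hw n]⟩) (by rwa [hT])
  choose y hy hyx using fun n => exists_rat_near_of_sum_smul_eq v s (x := x n)
    (by rw [← hT, hxT n]) (ε := fun _ => 1 / ((n : ℝ) + 1)) fun _ _ => Nat.one_div_pos_of_nat
  have hyβ : ∀ i ∈ s, Tendsto (fun n => (y n i : ℝ)) atTop (𝓝 (β i)) := fun i hi =>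
    (tendsto_pi_nhds.1 hxβ i).congr_dist <| squeeze_zero (fun _ => dist_nonneg)
      (fun n => (hyx n i hi).le) tendsto_one_div_add_atTop_nhds_zero_nat
  have hpos : ∀ᶠ n in atTop, ∀ i ∈ s, 0 ≤ y n i :=
    (eventually_all_finset s).2 fun i hi =>
      ((hyβ i hi).eventually (lt_mem_nhds (hβ i hi))).mono fun n hn => by exact_mod_cast hn.le
  refine ⟨fun n => if ∀ i ∈ s, 0 ≤ y n i then y n else r n, fun n => ?_, fun n => ?_,
    fun i hi => (hyβ i hi).congr' (hpos.mono fun n hn => by simp only [if_pos hn])⟩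
  · dsimp only
    split_ifs with h
    exacts [h, hr0 n]
  · dsimp only
    split_ifs
    exacts [hy n, hr n]

end RationalSolutions

lemma sum_smul_cons_one_eq_cons_one_iff {R : Type*} [CommRing R] {d : ℕ}
    (s : Finset (Fin d → R)) (c : (Fin d → R) → R) (p : Fin d → R) :
    ∑ z ∈ s, c z • (Fin.cons 1 z : Fin (d + 1) → R) = Fin.cons 1 p ↔
      ∑ z ∈ s, c z = 1 ∧ ∑ z ∈ s, c z • z = p := by
  have : ∑ z ∈ s, c z • (Fin.cons 1 z : Fin (d + 1) → R) =
      Fin.cons (∑ z ∈ s, c z) (∑ z ∈ s, c z • z) := by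
    ext j
    cases j using Fin.cases <;> simp [Finset.sum_apply]
  rw [this, Fin.cons_inj]

lemma exists_ratCast_comp_eq_cons_one {d : ℕ} {z : Fin d → ℝ} (hz : ∀ i, ∃ q : ℚ, z i = q) :
    ∃ q : Fin (d + 1) → ℚ, (Rat.cast ∘ q : Fin (d + 1) → ℝ) = Fin.cons 1 z := by
  choose q hq using hz
  exact ⟨Fin.cons 1 q, by rw [Fin.comp_cons, Rat.cast_one, Function.comp_def, ← funext hq]⟩

theorem stmt1 (d : ℕ) (I : Finset (Fin d → ℝ))
    (hIQ : ∀ z ∈ I, ∀ i, ∃ q : ℚ, z i = (q : ℝ))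
    (β : (Fin d → ℝ) → ℝ)
    (hβpos : ∀ z ∈ I, 0 < β z) (hβsum : ∑ z ∈ I, β z = 1)
    (ζ : Fin d → ℝ) (hζ : ζ = ∑ z ∈ I, β z • z)
    (ξ : ℕ → (Fin d → ℝ)) (hξ : ∀ n, ξ n ∈ convexHull ℝ (I : Set (Fin d → ℝ)))
    (hξQ : ∀ n i, ∃ q : ℚ, ξ n i = (q : ℝ))
    (hlim : Tendsto ξ atTop (𝓝 ζ)) :
    ∃ α : ℕ → (Fin d → ℝ) → ℝ,
      (∀ n, ∀ z ∈ I, ∃ q : ℚ, α n z = (q : ℝ)) ∧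
      (∀ n, ∀ z ∈ I, 0 ≤ α n z) ∧
      (∀ n, ∑ z ∈ I, α n z = 1) ∧
      (∀ n, ξ n = ∑ z ∈ I, α n z • z) ∧
      (∀ z ∈ I, Tendsto (fun n => α n z) atTop (𝓝 (β z))) := by
  classical
  obtain ⟨v, hv⟩ : ∃ v : (Fin d → ℝ) → Fin (d + 1) → ℚ,
      ∀ z ∈ I, (Rat.cast ∘ v z : Fin (d + 1) → ℝ) = Fin.cons 1 z := by
    choose v hv using fun z (hz : z ∈ I) => exists_ratCast_comp_eq_cons_one (hIQ z hz)
    exact ⟨fun z => if hz : z ∈ I then v z hz else 0, fun z hz => by simp [hz, hv]⟩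
  choose b hb using fun n => exists_ratCast_comp_eq_cons_one (hξQ n)
  have hsys : ∀ (c : (Fin d → ℝ) → ℝ) p,
      ∑ z ∈ I, c z • (Rat.cast ∘ v z : Fin (d + 1) → ℝ) = Fin.cons 1 p ↔
        ∑ z ∈ I, c z = 1 ∧ ∑ z ∈ I, c z • z = p := fun c p => by
    rw [Finset.sum_congr rfl fun z hz => by rw [hv z hz], sum_smul_cons_one_eq_cons_one_iff]
  have hcons : Continuous fun p : Fin d → ℝ => (Fin.cons 1 p : Fin (d + 1) → ℝ) :=
    continuous_const.finCons continuous_id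
  obtain ⟨α, hα0, hα, hαβ⟩ := exists_rat_nonneg_tendsto_of_sum_smul_eq v I hβpos (b := b)
    (fun n => by
      obtain ⟨w, hw0, hw1, hwξ⟩ := Finset.mem_convexHull'.1 (hξ n)
      exact ⟨w, hw0, by rw [hb, hsys]; exact ⟨hw1, hwξ⟩⟩)
    (by
      simp only [hb, (hsys β ζ).2 ⟨hβsum, hζ.symm⟩]
      exact (hcons.tendsto ζ).comp hlim)
  have hαξ : ∀ n, ∑ z ∈ I, (α n z : ℝ) = 1 ∧ ∑ z ∈ I, (α n z : ℝ) • z = ξ n := fun n =>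
    (hsys _ _).1 (by rw [← ratCast_comp_sum_smul, hα n, hb])
  exact ⟨fun n z => α n z, fun n z _ => ⟨α n z, rfl⟩, fun n z hz => Rat.cast_nonneg.2 (hα0 n z hz),
    fun n => (hαξ n).1, fun n => (hαξ n).2.symm, hαβ⟩
end

section
/- Let R ⊂ ℤ^d be a finite set, U its convex hull, and U₀ a face of U with 0 ∉ U₀. Set R₀ = R ∩ U₀. Then any admissible path x₀ = 0, x₁, ..., x_n with steps x_k − x_{k−1} ∈ R and endpoint x_n ∈ n·U₀ uses only steps from R₀ and visits no lattice point twice (all x₀,...,x_n are distinct). -/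
open Set Pointwise

/-!
The barycentre of the `n` steps `xₖ₊₁ - xₖ` is `xₙ / n`, a point of the face `U₀`. A face
containing a convex combination with positive weights of points of `U` contains all of them, so
every step lies in `U₀`. A loop `xᵢ = xⱼ` with `i < j` would make the steps between `i`
and `j` sum to `0`; their barycentre would then be `0 ∈ U₀`.
-/

section Convex

variable {𝕜 E ι : Type*} [Field 𝕜] [LinearOrder 𝕜] [IsStrictOrderedRing 𝕜]
  [AddCommGroup E] [Module 𝕜 E] {A B : Set E}

theorem IsExtreme.mem_of_centerMass_mem (hA : Convex 𝕜 A) (hAB : IsExtreme 𝕜 A B)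
    {s : Finset ι} {w : ι → 𝕜} {z : ι → E} (hw : ∀ i ∈ s, 0 < w i) (hz : ∀ i ∈ s, z i ∈ A)
    (hs : s.centerMass w z ∈ B) : ∀ i ∈ s, z i ∈ B := by
  classical
  induction s using Finset.induction_on with
  | empty => simp
  | insert a s ha ih =>
    simp only [Finset.forall_mem_insert] at hw hz ⊢
    rcases s.eq_empty_or_nonempty with rfl | hne
    · rw [insert_empty_eq, Finset.centerMass_singleton _ _ hw.1.ne'] at hs
      simpa using hs
    have hW : 0 < ∑ j ∈ s, w j := Finset.sum_pos hw.2 hne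
    have hp : s.centerMass w z ∈ A :=
      hA.centerMass_mem (fun i hi => (hw.2 i hi).le) hW hz.2
    have hseg : (insert a s).centerMass w z ∈ openSegment 𝕜 (z a) (s.centerMass w z) := by
      rw [Finset.centerMass_insert a s z ha hW.ne']
      have htot : 0 < w a + ∑ j ∈ s, w j := add_pos hw.1 hW
      exact ⟨_, _, div_pos hw.1 htot, div_pos hW htot, by rw [← add_div, div_self htot.ne'], rfl⟩
    exact ⟨hAB.left_mem_of_mem_openSegment hz.1 hp hs hseg,
      ih hw.2 hz.2 (hAB.right_mem_of_mem_openSegment hz.1 hp hs hseg)⟩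

theorem Convex.sum_ne_zero_of_zero_notMem (hB : Convex 𝕜 B) (h0 : (0 : E) ∉ B)
    {s : Finset ι} (hs : s.Nonempty) {z : ι → E} (hz : ∀ i ∈ s, z i ∈ B) :
    ∑ i ∈ s, z i ≠ 0 := by
  intro hsum
  have hmean : s.centerMass (fun _ => (1 : 𝕜)) z ∈ B :=
    hB.centerMass_mem (fun _ _ => zero_le_one) (by simpa using hs) hz
  rw [Finset.centerMass, Finset.sum_congr rfl fun _ _ => one_smul 𝕜 _, hsum, smul_zero] at hmean
  exact h0 hmean

end Convex

theorem stmt3_general (d n : ℕ) (R : Finset (Fin d → ℝ))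
    (U₀ : Set (Fin d → ℝ)) (hconv : Convex ℝ U₀)
    (hface : IsExtreme ℝ (convexHull ℝ (R : Set (Fin d → ℝ))) U₀)
    (h0 : (0 : Fin d → ℝ) ∉ U₀)
    (x : ℕ → Fin d → ℝ) (hx0 : x 0 = 0)
    (hstep : ∀ k < n, x (k+1) - x k ∈ R)
    (hend : x n ∈ (n : ℝ) • U₀) :
    (∀ k < n, x (k+1) - x k ∈ (R : Set (Fin d → ℝ)) ∩ U₀) ∧
    (∀ i ≤ n, ∀ j ≤ n, x i = x j → i = j) := by
  have hsteps : ∀ k < n, x (k+1) - x k ∈ U₀ := by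
    rcases n.eq_zero_or_pos with rfl | hn
    · simp
    obtain ⟨u, hu, hxn⟩ := hend
    have hmean : (Finset.range n).centerMass (fun _ => (1 : ℝ)) (fun k => x (k+1) - x k) = u := by
      simp only [Finset.centerMass, Finset.sum_const, Finset.card_range, one_smul,
        Finset.sum_range_sub, hx0, sub_zero, ← hxn, nsmul_eq_mul, mul_one, smul_smul]
      rw [inv_mul_cancel₀ (by positivity), one_smul]
    intro k hk
    refine hface.mem_of_centerMass_mem (convex_convexHull ℝ _) (fun _ _ => one_pos)
      (fun i hi => subset_convexHull ℝ _ (hstep i (Finset.mem_range.1 hi))) (hmean ▸ hu) k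
      (Finset.mem_range.2 hk)
  refine ⟨fun k hk => ⟨hstep k hk, hsteps k hk⟩, fun i hi j hj hxij => ?_⟩
  by_contra hne
  wlog hlt : i < j generalizing i j
  · exact this j hj i hi hxij.symm (Ne.symm hne) (by omega)
  have hloop : ∑ k ∈ Finset.Ico i j, (x (k+1) - x k) = 0 := by
    rw [Finset.sum_Ico_sub x hlt.le, hxij, sub_self]
  exact hconv.sum_ne_zero_of_zero_notMem h0 (Finset.nonempty_Ico.2 hlt)
    (fun k hk => hsteps k (by simp only [Finset.mem_Ico] at hk; omega)) hloop

theorem stmt3 (d n : ℕ) (R : Finset (Fin d → ℝ))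
    (hRZ : ∀ z ∈ R, ∀ i, ∃ m : ℤ, z i = (m : ℝ))
    (U₀ : Set (Fin d → ℝ)) (hconv : Convex ℝ U₀)
    (hface : IsExtreme ℝ (convexHull ℝ (R : Set (Fin d → ℝ))) U₀)
    (h0 : (0 : Fin d → ℝ) ∉ U₀)
    (x : ℕ → Fin d → ℝ) (hx0 : x 0 = 0)
    (hstep : ∀ k < n, x (k+1) - x k ∈ R)
    (hend : x n ∈ (n : ℝ) • U₀) :
    (∀ k < n, x (k+1) - x k ∈ (R : Set (Fin d → ℝ)) ∩ U₀) ∧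
    (∀ i ≤ n, ∀ j ≤ n, x i = x j → i = j) :=
  stmt3_general d n R U₀ hconv hface h0 x hx0 hstep hend
end
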